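/- For every real k with 17/13 ≤ k < 11/7 (i.e., p₇/p₆ ≤ k < p₅/p₄), the first k-Ramanujan prime satisfies R₁⁽ᵏ⁾ = 11. -/

import Mathlib

open Real

/-- The prime counting function `π` extended to the reals:
`primePi x` is the number of primes `p ≤ x`. -/
noncomputable def primePi (x : ℝ) : ℕ := Nat.primeCounting ⌊x⌋₊

/-- The first `k`-Ramanujan prime `R₁⁽ᵏ⁾`: the least positive integer `m` such that
`π(x) - π(x/k) ≥ 1` for every real `x ≥ m`. -/
noncomputable def firstRamanujanPrime (k : ℝ) : ℕ :=
  sInf {m : ℕ | 0 < m ∧ ∀ x : ℝ, (m : ℝ) ≤ x → primePi (x / k) < primePi x}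

/-- The `n`-th prime number, with `nthPrime 1 = 2`, `nthPrime 2 = 3`, … -/
noncomputable def nthPrime (n : ℕ) : ℕ := Nat.nth Nat.Prime (n - 1)

/-!
Chebyshev's method, in the form Nagura used. Legendre's identity
`log ⌊x⌋! = ∑_{d ≤ x} Λ(d) ⌊x/d⌋` turns the combination
`S(x) = T(x) - T(x/2) - T(x/3) - T(x/5) + T(x/30)`, `T(x) = log ⌊x⌋!`, into `∑ Λ(d) F(⌊x/d⌋)`
with a 30-periodic weight `F` taking values in `{0, 1}` and equal to `1` on `[1, 5]`; hence
`ψ(x) - ψ(x/6) ≤ S(x) ≤ ψ(x)`. Stirling's formula gives `S(x) = A x + O(log x)` with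
`A = log 2 / 2 + log 3 / 3 + log 5 / 5 - log 30 / 30 ≈ 0.92`, so `θ(x) ≥ A x - O(√x log x)` and
`ψ(x) ≤ 6/5 A x + O(log² x)`. As `6/5 · 13/17 < 1`, this forces `θ(13x/17) < θ(x)`, i.e. a prime in
`(13x/17, x]`, once `x ≥ 7⁸`; a chain of primes, each larger than `13/17` of the next, covers
`[11, 7⁸]`. Since `k ≥ 17/13`, every `x ≥ 11` therefore has a prime in `(x/k, x]`, while
`x = max 10 (7k) < 11` has `π(x) = π(10) = π(7) ≤ π(x/k)`.
-/

open Finset Chebyshev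
open scoped Nat ArithmeticFunction.vonMangoldt

def chebyshevWeight (N : ℕ) : ℤ := (N : ℤ) - (N / 2 : ℕ) - (N / 3 : ℕ) - (N / 5 : ℕ) + (N / 30 : ℕ)

lemma chebyshevWeight_nonneg (N : ℕ) : 0 ≤ chebyshevWeight N := by
  unfold chebyshevWeight; omega

lemma chebyshevWeight_le_one (N : ℕ) : chebyshevWeight N ≤ 1 := by
  unfold chebyshevWeight; omega

lemma chebyshevWeight_eq_one {N : ℕ} (h1 : 1 ≤ N) (h5 : N ≤ 5) : chebyshevWeight N = 1 := by
  unfold chebyshevWeight; omega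

lemma log_factorial_eq_sum_vonMangoldt (n : ℕ) :
    log (n ! : ℝ) = ∑ d ∈ Ioc 0 n, Λ d * (n / d : ℕ) := by
  rw [← ArithmeticFunction.sum_Ioc_mul_zeta_eq_sum, ArithmeticFunction.vonMangoldt_mul_zeta,
    ← prod_Ico_id_eq_factorial, Nat.cast_prod,
    log_prod fun m hm => Nat.cast_ne_zero.mpr (by simp at hm; omega)]
  rfl

lemma log_factorial_div_eq_sum_vonMangoldt (n j : ℕ) :
    log ((n / j) ! : ℝ) = ∑ d ∈ Ioc 0 n, Λ d * (n / d / j : ℕ) := by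
  rw [log_factorial_eq_sum_vonMangoldt]
  refine sum_subset (Ioc_subset_Ioc_right (Nat.div_le_self n j)) (fun d hd hd' => ?_) |>.trans ?_
  · simp only [mem_Ioc, not_and, not_le] at hd hd'
    rw [Nat.div_eq_of_lt (hd' hd.1), Nat.cast_zero, mul_zero]
  · refine sum_congr rfl fun d _ => ?_
    rw [Nat.div_div_eq_div_mul, Nat.div_div_eq_div_mul, Nat.mul_comm]

noncomputable def chebyshevSum (n : ℕ) : ℝ :=
  log (n ! : ℝ) - log ((n / 2) ! : ℝ) - log ((n / 3) ! : ℝ) - log ((n / 5) ! : ℝ) +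
    log ((n / 30) ! : ℝ)

lemma chebyshevSum_eq_sum_vonMangoldt (n : ℕ) :
    chebyshevSum n = ∑ d ∈ Ioc 0 n, Λ d * chebyshevWeight (n / d) := by
  rw [chebyshevSum, log_factorial_div_eq_sum_vonMangoldt n 2,
    log_factorial_div_eq_sum_vonMangoldt n 3, log_factorial_div_eq_sum_vonMangoldt n 5,
    log_factorial_div_eq_sum_vonMangoldt n 30,
    log_factorial_eq_sum_vonMangoldt, ← sum_sub_distrib, ← sum_sub_distrib, ← sum_sub_distrib,
    ← sum_add_distrib]
  refine sum_congr rfl fun d _ => ?_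
  simp only [chebyshevWeight, Int.cast_add, Int.cast_sub, Int.cast_natCast]
  ring

lemma psi_natCast_eq_sum (n : ℕ) : ψ n = ∑ d ∈ Ioc 0 n, Λ d := by
  rw [psi, Nat.floor_natCast]

lemma chebyshevSum_le_psi (n : ℕ) : chebyshevSum n ≤ ψ n := by
  rw [chebyshevSum_eq_sum_vonMangoldt, psi_natCast_eq_sum]
  refine sum_le_sum fun d _ => mul_le_of_le_one_right ArithmeticFunction.vonMangoldt_nonneg ?_
  exact_mod_cast chebyshevWeight_le_one _

lemma psi_le_chebyshevSum_add_psi_div_six (n : ℕ) : ψ n ≤ chebyshevSum n + ψ (n / 6 : ℕ) := by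
  have hsplit : ψ n - chebyshevSum n = ∑ d ∈ Ioc 0 n, Λ d * (1 - chebyshevWeight (n / d)) := by
    rw [chebyshevSum_eq_sum_vonMangoldt, psi_natCast_eq_sum, ← sum_sub_distrib]
    exact sum_congr rfl fun d _ => by ring
  -- for `n / 6 < d ≤ n` we have `1 ≤ n / d ≤ 5`, where the weight is one
  have htail : ∑ d ∈ Ioc 0 n, Λ d * (1 - chebyshevWeight (n / d))
      = ∑ d ∈ Ioc 0 (n / 6), Λ d * (1 - chebyshevWeight (n / d)) := by
    refine (sum_subset (Ioc_subset_Ioc_right (Nat.div_le_self n 6)) fun d hd hd' => ?_).symm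
    simp only [mem_Ioc, not_and, not_le] at hd hd'
    have hd6 := hd' hd.1
    rw [chebyshevWeight_eq_one ((Nat.one_le_div_iff hd.1).mpr hd.2)
      (Nat.lt_succ_iff.mp ((Nat.div_lt_iff_lt_mul hd.1).mpr (by omega))), Int.cast_one, sub_self,
      mul_zero]
  have hle : ∑ d ∈ Ioc 0 (n / 6), Λ d * (1 - chebyshevWeight (n / d)) ≤ ψ (n / 6 : ℕ) := by
    rw [psi_natCast_eq_sum]
    refine sum_le_sum fun d _ => mul_le_of_le_one_right ArithmeticFunction.vonMangoldt_nonneg ?_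
    have : (0 : ℝ) ≤ chebyshevWeight (n / d) := by exact_mod_cast chebyshevWeight_nonneg (n / d)
    linarith
  linarith

noncomputable def stirlingApprox (x : ℝ) : ℝ := x * log x - x

lemma stirlingApprox_sub_le {x y : ℝ} (hy : 0 < y) (hyx : y ≤ x) :
    stirlingApprox x - stirlingApprox y ≤ (x - y) * log x := by
  have hx : 0 < x := hy.trans_le hyx
  have h : y * (log x - log y) ≤ x - y := by
    rw [← log_div hx.ne' hy.ne']
    calc y * log (x / y) ≤ y * (x / y - 1) :=
          mul_le_mul_of_nonneg_left (log_le_sub_one_of_pos (by positivity)) hy.le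
      _ = x - y := by field_simp
  unfold stirlingApprox
  linarith

lemma sub_mul_log_le_stirlingApprox_sub {x y : ℝ} (hy : 0 < y) (hyx : y ≤ x) :
    (x - y) * log y ≤ stirlingApprox x - stirlingApprox y := by
  have hx : 0 < x := hy.trans_le hyx
  have h : x * (log y - log x) ≤ y - x := by
    rw [← log_div hy.ne' hx.ne']
    calc x * log (y / x) ≤ x * (y / x - 1) :=
          mul_le_mul_of_nonneg_left (log_le_sub_one_of_pos (by positivity)) hx.le
      _ = y - x := by field_simp
  unfold stirlingApprox
  linarith

lemma stirlingApprox_monotoneOn : MonotoneOn stirlingApprox (Set.Ici 1) := fun y hy x _ hyx => by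
  have := sub_mul_log_le_stirlingApprox_sub (zero_lt_one.trans_le hy) hyx
  nlinarith [log_nonneg (Set.mem_Ici.mp hy)]

lemma log_factorial_le (n : ℕ) (hn : n ≠ 0) :
    log (n ! : ℝ) ≤ stirlingApprox n + log n / 2 + 1 := by
  obtain ⟨m, rfl⟩ := Nat.exists_eq_succ_of_ne_zero hn
  have hseq : log (Stirling.stirlingSeq (m + 1)) ≤ 1 - log 2 / 2 := by
    calc log (Stirling.stirlingSeq (m + 1))
        ≤ log (Stirling.stirlingSeq 1) :=
          log_le_log (Stirling.stirlingSeq'_pos m) (Stirling.stirlingSeq'_antitone (Nat.zero_le m))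
      _ = 1 - log 2 / 2 := by
          rw [Stirling.stirlingSeq_one, log_div (exp_pos 1).ne' (by positivity), log_exp,
            log_sqrt zero_le_two]
  have hm : (0 : ℝ) < (m + 1 : ℕ) := by positivity
  rw [Stirling.log_stirlingSeq_formula, log_mul two_ne_zero hm.ne', log_div hm.ne' (exp_pos 1).ne',
    log_exp] at hseq
  unfold stirlingApprox
  linarith

lemma stirlingApprox_le_log_factorial (n : ℕ) : stirlingApprox n ≤ log (n ! : ℝ) := by
  rcases eq_or_ne n 0 with rfl | hn
  · simp [stirlingApprox]
  have := Stirling.le_log_factorial_stirling hn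
  have := log_nonneg (show (1 : ℝ) ≤ n by exact_mod_cast Nat.one_le_iff_ne_zero.mpr hn)
  have := log_pos (show (1 : ℝ) < 2 * π by linarith [pi_gt_three])
  unfold stirlingApprox
  linarith

lemma log_factorial_floor_le {x : ℝ} (hx : 1 ≤ x) :
    log (⌊x⌋₊ ! : ℝ) ≤ stirlingApprox x + log x / 2 + 1 := by
  have h1 : (1 : ℝ) ≤ ⌊x⌋₊ := by exact_mod_cast (Nat.one_le_floor_iff x).mpr hx
  have hfx : (⌊x⌋₊ : ℝ) ≤ x := Nat.floor_le (by linarith)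
  have := log_factorial_le ⌊x⌋₊ (by exact_mod_cast (zero_lt_one.trans_le h1).ne')
  have := stirlingApprox_monotoneOn (Set.mem_Ici.mpr h1) (Set.mem_Ici.mpr hx) hfx
  have := log_le_log (by linarith) hfx
  linarith

lemma stirlingApprox_sub_log_le_log_factorial_floor {x : ℝ} (hx : 1 ≤ x) :
    stirlingApprox x - log x ≤ log (⌊x⌋₊ ! : ℝ) := by
  have h1 : (1 : ℝ) ≤ ⌊x⌋₊ := by exact_mod_cast (Nat.one_le_floor_iff x).mpr hx
  have hgap := stirlingApprox_sub_le (by linarith) (Nat.floor_le (by linarith) : (⌊x⌋₊ : ℝ) ≤ x)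
  have := stirlingApprox_le_log_factorial ⌊x⌋₊
  have : (x - ⌊x⌋₊) * log x ≤ log x :=
    mul_le_of_le_one_left (log_nonneg hx) (by linarith [Nat.lt_floor_add_one x])
  linarith

lemma one_le_div_and_log_div_le_log {n j : ℕ} (hj : 0 < j) (hjn : j ≤ n) :
    1 ≤ (n / j : ℝ) ∧ log (n / j : ℝ) ≤ log n := by
  have hj1 : (1 : ℝ) ≤ j := by exact_mod_cast hj
  have h1 : (1 : ℝ) ≤ n / j := (one_le_div (by linarith)).mpr (by exact_mod_cast hjn)
  exact ⟨h1, log_le_log (by linarith) (div_le_self (by positivity) hj1)⟩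

lemma log_factorial_div_le {n j : ℕ} (hj : 0 < j) (hjn : j ≤ n) :
    log ((n / j) ! : ℝ) ≤ stirlingApprox (n / j : ℝ) + log n / 2 + 1 := by
  obtain ⟨h1, hlog⟩ := one_le_div_and_log_div_le_log hj hjn
  rw [← Nat.floor_div_eq_div (K := ℝ)]
  linarith [log_factorial_floor_le h1]

lemma stirlingApprox_div_sub_log_le {n j : ℕ} (hj : 0 < j) (hjn : j ≤ n) :
    stirlingApprox (n / j : ℝ) - log n ≤ log ((n / j) ! : ℝ) := by
  obtain ⟨h1, hlog⟩ := one_le_div_and_log_div_le_log hj hjn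
  rw [← Nat.floor_div_eq_div (K := ℝ)]
  linarith [stirlingApprox_sub_log_le_log_factorial_floor h1]

noncomputable def chebyshevConst : ℝ := log 2 / 2 + log 3 / 3 + log 5 / 5 - log 30 / 30

lemma stirlingApprox_combination {x : ℝ} (hx : 0 < x) :
    stirlingApprox x - stirlingApprox (x / 2) - stirlingApprox (x / 3) - stirlingApprox (x / 5) +
      stirlingApprox (x / 30) = chebyshevConst * x := by
  simp only [stirlingApprox, chebyshevConst, log_div hx.ne' (by norm_num : (2 : ℝ) ≠ 0),
    log_div hx.ne' (by norm_num : (3 : ℝ) ≠ 0), log_div hx.ne' (by norm_num : (5 : ℝ) ≠ 0),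
    log_div hx.ne' (by norm_num : (30 : ℝ) ≠ 0)]
  ring

lemma chebyshevConst_eq_log : chebyshevConst = log (2 ^ 14 * 3 ^ 9 * 5 ^ 5) / 30 := by
  have h30 : log 30 = log 2 + log 3 + log 5 := by
    rw [show (30 : ℝ) = 2 * 3 * 5 by norm_num, log_mul (by norm_num) (by norm_num),
      log_mul (by norm_num) (by norm_num)]
  rw [chebyshevConst, h30, log_mul (by norm_num) (by norm_num), log_mul (by norm_num) (by norm_num),
    log_pow, log_pow, log_pow]
  push_cast
  ring

lemma nine_tenths_le_chebyshevConst : 9 / 10 ≤ chebyshevConst := by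
  rw [chebyshevConst_eq_log, le_div_iff₀ (by norm_num), le_log_iff_exp_le (by norm_num),
    show (9 / 10 * 30 : ℝ) = (27 : ℕ) * 1 by norm_num, exp_nat_mul]
  calc exp 1 ^ 27 ≤ 2.7182818286 ^ 27 := pow_le_pow_left₀ (exp_pos 1).le exp_one_lt_d9.le 27
    _ ≤ 2 ^ 14 * 3 ^ 9 * 5 ^ 5 := by norm_num

lemma chebyshevSum_ge {n : ℕ} (hn : 30 ≤ n) :
    chebyshevConst * n - 5 / 2 * log n - 3 ≤ chebyshevSum n := by
  have h2 := log_factorial_div_le (j := 2) (by norm_num) (by omega : 2 ≤ n)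
  have h3 := log_factorial_div_le (j := 3) (by norm_num) (by omega : 3 ≤ n)
  have h5 := log_factorial_div_le (j := 5) (by norm_num) (by omega : 5 ≤ n)
  have h30 := stirlingApprox_div_sub_log_le (j := 30) (by norm_num) hn
  have h1 := stirlingApprox_le_log_factorial n
  have := stirlingApprox_combination (x := n) (by positivity)
  push_cast at h2 h3 h5 h30
  rw [chebyshevSum]
  linarith

lemma chebyshevSum_le {n : ℕ} (hn : 30 ≤ n) :
    chebyshevSum n ≤ chebyshevConst * n + 4 * log n + 2 := by
  have h2 := stirlingApprox_div_sub_log_le (j := 2) (by norm_num) (by omega : 2 ≤ n)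
  have h3 := stirlingApprox_div_sub_log_le (j := 3) (by norm_num) (by omega : 3 ≤ n)
  have h5 := stirlingApprox_div_sub_log_le (j := 5) (by norm_num) (by omega : 5 ≤ n)
  have h30 := log_factorial_div_le (j := 30) (by norm_num) hn
  have h1 := log_factorial_le n (by omega)
  have := stirlingApprox_combination (x := n) (by positivity)
  push_cast at h2 h3 h5 h30
  rw [chebyshevSum]
  linarith

lemma psi_natCast_le_six_fifths (n : ℕ) :
    ψ n ≤ 6 / 5 * chebyshevConst * n + 4 * log (n + 1) ^ 2 + 180 := by
  induction n using Nat.strong_induction_on with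
  | _ n ih =>
  have hA := nine_tenths_le_chebyshevConst
  have hlog4 : log 4 = 2 * log 2 := by
    rw [show (4 : ℝ) = 2 ^ 2 by norm_num, log_pow, Nat.cast_ofNat]
  rcases lt_or_ge n 30 with hn | hn
  · have hψ := psi_le_const_mul_self (x := n) (Nat.cast_nonneg n)
    have hn' : (n : ℝ) ≤ 30 := by exact_mod_cast hn.le
    nlinarith [sq_nonneg (log (n + 1)), Nat.cast_nonneg (α := ℝ) n, log_two_lt_d9]
  · have ih6 := ih (n / 6) (by omega)
    have hrec := psi_le_chebyshevSum_add_psi_div_six n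
    have hS := chebyshevSum_le hn
    have hcast : ((n / 6 : ℕ) : ℝ) ≤ n / 6 := Nat.cast_div_le
    -- the gap `log 4` between `log (n + 1)` and `log (n / 6 + 1)` absorbs the error `4 log n + 2`
    have hgap : log ((n / 6 : ℕ) + 1) + 2 * log 2 ≤ log (n + 1) := by
      rw [← hlog4, ← log_mul (by positivity) (by norm_num)]
      exact log_le_log (by positivity) (by exact_mod_cast (by omega : (n / 6 + 1) * 4 ≤ n + 1))
    have hlogn : 2 * log 2 ≤ log n := by
      rw [← hlog4]
      exact log_le_log (by norm_num) (by exact_mod_cast (by omega : 4 ≤ n))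
    have hlog_mono : log n ≤ log (n + 1) := log_le_log (by positivity) (by linarith)
    have hb : 0 ≤ log ((n / 6 : ℕ) + 1 : ℝ) :=
      log_nonneg (by linarith [Nat.cast_nonneg (α := ℝ) (n / 6)])
    have hsq : log n * (2 * log 2) ≤ log (n + 1) ^ 2 - log ((n / 6 : ℕ) + 1 : ℝ) ^ 2 := by
      rw [sq_sub_sq]
      exact mul_le_mul (by linarith) (by linarith) (by positivity)
        (by linarith [log_pos one_lt_two])
    nlinarith [log_two_gt_d9]

lemma psi_le_six_fifths {x : ℝ} (hx : 0 ≤ x) :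
    ψ x ≤ 6 / 5 * chebyshevConst * x + 4 * log (x + 1) ^ 2 + 180 := by
  have hfx : (⌊x⌋₊ : ℝ) ≤ x := Nat.floor_le hx
  have hlog : log (⌊x⌋₊ + 1) ≤ log (x + 1) := log_le_log (by positivity) (by linarith)
  have hsq := pow_le_pow_left₀ (log_nonneg (by linarith [Nat.cast_nonneg (α := ℝ) ⌊x⌋₊])) hlog 2
  have := psi_natCast_le_six_fifths ⌊x⌋₊
  have := nine_tenths_le_chebyshevConst
  rw [psi_eq_psi_coe_floor]
  nlinarith

lemma theta_ge_chebyshevConst_mul {x : ℝ} (hx : 30 ≤ x) :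
    chebyshevConst * x - chebyshevConst - 5 / 2 * log x - 3 - 2 * √x * log x ≤ θ x := by
  have hn : 30 ≤ ⌊x⌋₊ := Nat.le_floor (by exact_mod_cast hx)
  have hn' : (30 : ℝ) ≤ ⌊x⌋₊ := by exact_mod_cast hn
  have hfx : (⌊x⌋₊ : ℝ) ≤ x := Nat.floor_le (by linarith)
  have hlog : log ⌊x⌋₊ ≤ log x := log_le_log (by linarith) hfx
  have hgap : 2 * √⌊x⌋₊ * log ⌊x⌋₊ ≤ 2 * √x * log x := by gcongr
  have := psi_sub_theta_le (x := ⌊x⌋₊) (by linarith)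
  have := chebyshevSum_ge hn
  have := chebyshevSum_le_psi ⌊x⌋₊
  have := Nat.lt_floor_add_one x
  have := nine_tenths_le_chebyshevConst
  rw [theta_eq_theta_coe_floor]
  nlinarith

lemma theta_lt_theta_of_seven_pow_eight_le {x : ℝ} (hx : 7 ^ 8 ≤ x) :
    θ (13 / 17 * x) < θ x := by
  -- in terms of `y = x ^ (1 / 8)` the comparison becomes a polynomial inequality
  obtain ⟨y, hy, rfl⟩ : ∃ y : ℝ, 7 ≤ y ∧ y ^ 8 = x := by
    refine ⟨x ^ ((8 : ℕ)⁻¹ : ℝ), ?_, rpow_inv_natCast_pow (by linarith) (by norm_num)⟩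
    calc (7 : ℝ) = ((7 : ℝ) ^ 8) ^ ((8 : ℕ)⁻¹ : ℝ) :=
          (pow_rpow_inv_natCast (by norm_num) (by norm_num)).symm
      _ ≤ _ := rpow_le_rpow (by positivity) hx (by positivity)
  have hlow := theta_ge_chebyshevConst_mul (x := y ^ 8) (by linarith)
  have hup := (theta_le_psi _).trans (psi_le_six_fifths (x := 13 / 17 * y ^ 8) (by positivity))
  have hsqrt : √(y ^ 8) = y ^ 4 := by
    rw [show y ^ 8 = (y ^ 4) ^ 2 by ring]
    exact sqrt_sq (by positivity)
  have hlog : log (y ^ 8) = 8 * log y := by rw [log_pow]; norm_num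
  have hlogy : log y ≤ y - 1 := log_le_sub_one_of_pos (by linarith)
  have hlog1 : log (13 / 17 * y ^ 8 + 1) ≤ 8 * (y - 1) := by
    linarith [log_le_log (by positivity) (by linarith : 13 / 17 * y ^ 8 + 1 ≤ y ^ 8)]
  have hlog1' := pow_le_pow_left₀ (log_nonneg (by nlinarith)) hlog1 2
  have hA := nine_tenths_le_chebyshevConst
  rw [hsqrt, hlog] at hlow
  have hy3 : (7 : ℝ) ^ 3 ≤ y ^ 3 := pow_le_pow_left₀ (by norm_num) hy 3
  have hpoly : 256 * (y - 1) ^ 2 + 183 + 20 * (y - 1) + 16 * y ^ 4 * (y - 1)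
      < 9 / 10 * (7 / 85 * y ^ 8 - 1) := by
    nlinarith [mul_le_mul_of_nonneg_left hy3 (by positivity : (0 : ℝ) ≤ y ^ 5)]
  have hprod : y ^ 4 * (8 * log y) ≤ y ^ 4 * (8 * (y - 1)) := by gcongr
  nlinarith

lemma exists_prime_of_theta_lt {x y : ℝ} (h : θ y < θ x) :
    ∃ p : ℕ, p.Prime ∧ (p : ℝ) ∈ Set.Ioc y x := by
  by_contra! hnone
  refine h.not_ge (sum_le_sum_of_subset_of_nonneg (fun p hp => ?_) fun p _ _ => ?_)
  · simp only [mem_filter, mem_Ioc] at hp ⊢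
    obtain ⟨⟨hp0, hpx⟩, hprime⟩ := hp
    have hpx' : (p : ℝ) ≤ x := (Nat.le_floor_iff' hp0.ne').mp hpx
    have hpy : (p : ℝ) ≤ y := not_lt.mp fun hyp => hnone p hprime ⟨hyp, hpx'⟩
    exact ⟨⟨hp0, (Nat.le_floor_iff' hp0.ne').mpr hpy⟩, hprime⟩
  · exact log_natCast_nonneg p

def ExistsPrimeBetween (c x : ℝ) : Prop := ∃ p : ℕ, p.Prime ∧ (p : ℝ) ∈ Set.Ioc (c * x) x

lemma existsPrimeBetween_of_seven_pow_eight_le {x : ℝ} (hx : 7 ^ 8 ≤ x) :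
    ExistsPrimeBetween (13 / 17) x :=
  exists_prime_of_theta_lt (theta_lt_theta_of_seven_pow_eight_le hx)

lemma forall_existsPrimeBetween_of_isChain {c : ℝ} (hc : 0 < c) (a : ℕ) (l : List ℕ)
    (hchain : (a :: l).IsChain fun p q : ℕ => p.Prime ∧ c * q ≤ p)
    (htop : ∀ x : ℝ, ((a :: l).getLast (List.cons_ne_nil a l) : ℝ) ≤ x → ExistsPrimeBetween c x) :
    ∀ x : ℝ, (a : ℝ) ≤ x → ExistsPrimeBetween c x := by
  induction l generalizing a with
  | nil => simpa using htop
  | cons b l ih =>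
    rw [List.isChain_cons_cons] at hchain
    obtain ⟨⟨ha, hab⟩, hchain⟩ := hchain
    have hb := ih b hchain (by simpa using htop)
    intro x hax
    by_cases hxb : (b : ℝ) ≤ x
    · exact hb x hxb
    · exact ⟨a, ha, by nlinarith [mul_lt_mul_of_pos_left (not_le.mp hxb) hc], hax⟩

lemma existsPrimeBetween_of_eleven_le {x : ℝ} (hx : 11 ≤ x) : ExistsPrimeBetween (13 / 17) x := by
  refine forall_existsPrimeBetween_of_isChain (by norm_num) 11
    [13, 17, 19, 23, 29, 37, 47, 61, 79, 103, 131, 167, 211, 271, 353, 461, 601, 773, 1009, 1319,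
      1723, 2251, 2939, 3833, 5011, 6551, 8563, 11197, 14639, 19141, 25013, 32707, 42767, 55921,
      73127, 95621, 125029, 163487, 213751, 279511, 365513, 477977, 625033, 817337, 1068817,
      1397681, 1827733, 2390111, 3125527, 4087217, 5344813, 7 ^ 8] (by norm_num)
    (fun x hx => existsPrimeBetween_of_seven_pow_eight_le (by norm_num; simpa using hx)) x
    (by exact_mod_cast hx)

lemma primePi_lt_primePi_of_prime_mem_Ioc {p : ℕ} (hp : p.Prime) {y x : ℝ}
    (hpyx : (p : ℝ) ∈ Set.Ioc y x) : primePi y < primePi x := by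
  have hy : ⌊y⌋₊ < p := (Nat.floor_lt' hp.ne_zero).mpr hpyx.1
  have hx : p ≤ ⌊x⌋₊ := (Nat.le_floor_iff' hp.ne_zero).mpr hpyx.2
  calc primePi y ≤ Nat.count Nat.Prime p := Nat.count_monotone _ (by omega)
    _ < Nat.count Nat.Prime (p + 1) := Nat.count_lt_count_succ_iff.mpr hp
    _ ≤ primePi x := Nat.count_monotone _ (by omega)

lemma primePi_div_lt_primePi {k : ℝ} (hk : 17 / 13 ≤ k) {x : ℝ} (hx : 11 ≤ x) :
    primePi (x / k) < primePi x := by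
  obtain ⟨p, hp, hlo, hhi⟩ := existsPrimeBetween_of_eleven_le hx
  refine primePi_lt_primePi_of_prime_mem_Ioc hp ⟨lt_of_le_of_lt ?_ hlo, hhi⟩
  rw [div_le_iff₀ (by linarith)]
  nlinarith

lemma exists_primePi_le_primePi_div {k : ℝ} (hk0 : 0 < k) (hk : k < 11 / 7) :
    ∃ x : ℝ, 10 ≤ x ∧ primePi x ≤ primePi (x / k) := by
  refine ⟨max 10 (7 * k), le_max_left _ _, ?_⟩
  have hfloor : ⌊max 10 (7 * k)⌋₊ = 10 :=
    Nat.floor_eq_iff (by positivity) |>.mpr ⟨by simp, by norm_num; linarith⟩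
  have h7 : 7 ≤ ⌊max 10 (7 * k) / k⌋₊ :=
    Nat.le_floor (by rw [le_div_iff₀ hk0]; push_cast; exact le_max_right _ _)
  calc primePi (max 10 (7 * k)) = Nat.primeCounting 7 := by rw [primePi, hfloor]; decide
    _ ≤ primePi (max 10 (7 * k) / k) := Nat.monotone_primeCounting h7

lemma firstRamanujanPrime_eq_of {k : ℝ} {m : ℕ} (hm : 0 < m)
    (hge : ∀ x : ℝ, m ≤ x → primePi (x / k) < primePi x)
    (hfail : ∃ x : ℝ, (m : ℝ) - 1 ≤ x ∧ primePi x ≤ primePi (x / k)) :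
    firstRamanujanPrime k = m := by
  have hmem : m ∈ {m : ℕ | 0 < m ∧ ∀ x : ℝ, (m : ℝ) ≤ x → primePi (x / k) < primePi x} :=
    ⟨hm, hge⟩
  refine le_antisymm (Nat.sInf_le hmem) (le_csInf ⟨m, hmem⟩ fun m' ⟨_, hm'⟩ => ?_)
  obtain ⟨x, hx, hfx⟩ := hfail
  by_contra! hlt
  have : (m' : ℝ) ≤ m - 1 := by
    rw [le_sub_iff_add_le]
    exact_mod_cast hlt
  exact (hm' x (by linarith)).not_ge hfx

theorem first_k_ramanujan_stmt12 (k : ℝ) (hk1 : (17 / 13 : ℝ) ≤ k) (hk2 : k < (11 / 7 : ℝ)) :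
    firstRamanujanPrime k = 11 := by
  obtain ⟨x, hx, hfail⟩ := exists_primePi_le_primePi_div (by linarith) hk2
  refine firstRamanujanPrime_eq_of (by norm_num) (fun y hy => primePi_div_lt_primePi hk1 ?_)
    ⟨x, ?_, hfail⟩
  · exact_mod_cast hy
  · norm_num
    linarith
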